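/- Suppose there are n ≥ 2 arms with loss sequences ℓ_{i,t} whose limits ν_i exist and satisfy ν_1 < ν_2 ≤ … ≤ ν_n, let γ̄ be a common envelope for all arms, and suppose the budget satisfies B ≥ n·⌈log₂ n⌉ (so that every round allocates at least one pull). Then the output arm î_SH of the Successive Halving algorithm with budget B satisfies ν_{î_SH} − ν_1 ≤ 2·⌈log₂ n⌉ · γ̄(⌊B/(n·⌈log₂ n⌉)⌋), for every admissible tie-breaking rule. -/

import Mathlib

open Filter Topology

/-- A run of the Successive Halving algorithm with budget `B` on `n` arms with loss
sequences `ℓ` (an arbitrary admissible tie-breaking rule): `S 0 = {1,…,n}`; for each round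
`k = 0,…,⌈log₂ n⌉ − 1`, the cumulative pull count is
`R_k = ∑_{j=0}^k ⌊B / (|S_j| · ⌈log₂ n⌉)⌋`, and `S (k+1) ⊆ S k` is a subset of size
`⌊|S_k|/2⌋` consisting of arms with the smallest values of `ℓ_{i,R_k}` among `i ∈ S k`. -/
def IsSHRun (n B : ℕ) (ℓ : Fin n → ℕ → ℝ) (S : ℕ → Finset (Fin n)) : Prop :=
  S 0 = Finset.univ ∧
  ∀ k < Nat.clog 2 n,
    S (k + 1) ⊆ S k ∧
    (S (k + 1)).card = (S k).card / 2 ∧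
    ∀ i ∈ S (k + 1), ∀ j ∈ S k, j ∉ S (k + 1) →
      ℓ i (∑ j' ∈ Finset.range (k + 1), B / ((S j').card * Nat.clog 2 n)) ≤
        ℓ j (∑ j' ∈ Finset.range (k + 1), B / ((S j').card * Nat.clog 2 n))

/-!
If the best arm survives every round it is the output. Otherwise it is eliminated in some
round `k`, so every arm kept in that round had a loss no larger than the best arm's at time
`R_k ≥ ⌊B/(n·⌈log₂ n⌉)⌋`; through the envelope its limit exceeds `ν_1` by at most
`2·γ̄(R_k) ≤ 2·γ̄(⌊B/(n·⌈log₂ n⌉)⌋)`, and all later survivors are among these arms.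
-/

/-- The cumulative number of pulls `R_k` after round `k` of a Successive Halving run. -/
def cumulativePulls (n B : ℕ) (S : ℕ → Finset (Fin n)) (k : ℕ) : ℕ :=
  ∑ j ∈ Finset.range (k + 1), B / ((S j).card * Nat.clog 2 n)

theorem limit_le_add_two_mul_of_le {ι : Type*} {ℓ : ι → ℕ → ℝ} {ν : ι → ℝ} {γ : ℕ → ℝ}
    (henv : ∀ i, ∀ t, 1 ≤ t → |ℓ i t - ν i| ≤ γ t) {i j : ι} {t : ℕ} (ht : 1 ≤ t)
    (hij : ℓ i t ≤ ℓ j t) : ν i ≤ ν j + 2 * γ t := by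
  have hi := (abs_le.1 (henv i t ht)).1
  have hj := (abs_le.1 (henv j t ht)).2
  linarith

namespace IsSHRun

variable {n B : ℕ} {ℓ : Fin n → ℕ → ℝ} {S : ℕ → Finset (Fin n)}

theorem card_eq (h : IsSHRun n B ℓ S) : ∀ m ≤ Nat.clog 2 n, (S m).card = n / 2 ^ m := by
  intro m hm
  induction m with
  | zero => simp [h.1]
  | succ m ih =>
    rw [(h.2 m (by omega)).2.1, ih (by omega), Nat.div_div_eq_div_mul, pow_succ]

theorem card_final_le_one (h : IsSHRun n B ℓ S) : (S (Nat.clog 2 n)).card ≤ 1 := by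
  rw [h.card_eq _ le_rfl]
  exact Nat.div_le_of_le_mul (by simpa using Nat.le_pow_clog one_lt_two n)

theorem firstRound_le_cumulativePulls (h : IsSHRun n B ℓ S) (k : ℕ) :
    B / (n * Nat.clog 2 n) ≤ cumulativePulls n B S k := by
  have hfirst := Finset.single_le_sum (f := fun j => B / ((S j).card * Nat.clog 2 n))
    (fun _ _ => Nat.zero_le _) (Finset.mem_range.2 k.succ_pos)
  simpa [h.1, cumulativePulls] using hfirst

theorem mem_or_forall_limit_le (h : IsSHRun n B ℓ S) {ν : Fin n → ℝ} {γ : ℕ → ℝ}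
    (hγ : Antitone γ) (henv : ∀ i, ∀ t, 1 ≤ t → |ℓ i t - ν i| ≤ γ t)
    (hB : n * Nat.clog 2 n ≤ B) (a : Fin n) :
    ∀ m ≤ Nat.clog 2 n,
      a ∈ S m ∨ ∀ j ∈ S m, ν j ≤ ν a + 2 * γ (B / (n * Nat.clog 2 n)) := by
  intro m hm
  induction m with
  | zero => exact .inl (h.1 ▸ Finset.mem_univ a)
  | succ m ih =>
    obtain ⟨hsub, -, hloss⟩ := h.2 m (by omega)
    rcases ih (by omega) with ha | hbound
    · by_cases ha' : a ∈ S (m + 1)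
      · exact .inl ha'
      right
      intro j hj
      have hfirst : 1 ≤ B / (n * Nat.clog 2 n) :=
        (Nat.one_le_div_iff (Nat.mul_pos a.pos (by omega))).2 hB
      have hR := h.firstRound_le_cumulativePulls m
      calc ν j ≤ ν a + 2 * γ (cumulativePulls n B S m) :=
            limit_le_add_two_mul_of_le henv (hfirst.trans hR) (hloss j hj a ha ha')
        _ ≤ ν a + 2 * γ (B / (n * Nat.clog 2 n)) := by linarith [hγ hR]
    · exact .inr fun j hj => hbound j (hsub hj)

end IsSHRun

/-- **Successive Halving outputs a pretty good arm (Theorem 4, first part).**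
With `n ≥ 2` arms (indexed by `Fin n`, arm `0` being arm 1 of the paper), loss sequences
`ℓ i` converging to limits `ν ⟨0⟩ < ν ⟨1⟩ ≤ … ≤ ν ⟨n-1⟩`, a common non-increasing envelope
`γ`, and a budget `B ≥ n·⌈log₂ n⌉` (so every round allocates at least one pull), every
output arm `î` of every run of Successive Halving (i.e. for every admissible tie-breaking
rule) satisfies `ν_î − ν_1 ≤ 2·⌈log₂ n⌉·γ(⌊B/(n·⌈log₂ n⌉)⌋)`. -/
theorem successive_halving_pretty_good_arm
    (n B : ℕ) (hn : 2 ≤ n)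
    (ℓ : Fin n → ℕ → ℝ) (ν : Fin n → ℝ)
    (γ : ℕ → ℝ) (hγanti : Antitone γ)
    (henv : ∀ i, ∀ t, 1 ≤ t → |ℓ i t - ν i| ≤ γ t)
    (hB : n * Nat.clog 2 n ≤ B)
    (S : ℕ → Finset (Fin n)) (hrun : IsSHRun n B ℓ S) :
    ∀ i ∈ S (Nat.clog 2 n),
      ν i - ν ⟨0, by omega⟩ ≤
        2 * (Nat.clog 2 n : ℝ) * γ (B / (n * Nat.clog 2 n)) := by
  intro i hi
  set K := Nat.clog 2 n
  set best : Fin n := ⟨0, by omega⟩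
  have hKpos : 0 < K := Nat.clog_pos one_lt_two hn
  have hK : (1 : ℝ) ≤ K := by exact_mod_cast hKpos
  have hγ : 0 ≤ γ (B / (n * K)) := (abs_nonneg _).trans
    (henv best _ ((Nat.one_le_div_iff (Nat.mul_pos (by omega) hKpos)).2 hB))
  rcases hrun.mem_or_forall_limit_le hγanti henv hB best K le_rfl with hbest | hbound
  · rw [Finset.card_le_one.1 hrun.card_final_le_one i hi best hbest, sub_self]
    positivity
  · calc ν i - ν best ≤ 2 * γ (B / (n * K)) := by linarith [hbound i hi]
      _ ≤ 2 * K * γ (B / (n * K)) := by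
        rw [mul_right_comm]; exact le_mul_of_one_le_right (by positivity) (by linarith)
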